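/- Let h : (0,1] → [0,∞) be a nonincreasing integrable function with ∫₀¹ h(s) log⁺ h(s) ds < ∞ (i.e. h belongs to the Zygmund class L log L on [0,1]). Then ∫₀¹ h(s) log(1/s) ds < ∞; consequently, for Δ(t) = ∫₀^t h(s) ds one has ∫₀¹ Δ(t)/t dt < ∞ and lim_{δ→0⁺} ∫₀^δ Δ(t)/t dt = 0. (The key estimate in the proof of Proposition 1 of the paper.) -/

import Mathlib

/-!
For `x, u ≥ 0` one has `x log u ≤ 4 u^{3/4} + 2 x log⁺ x`: either `log u ≤ 2 log x`, or
`x ≤ u^{1/2}` and `log u ≤ 4 u^{1/4}`. With `u = 1/s` this dominates `h(s) log(1/s)` by an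
integrable function on `(0,1]`. By Tonelli,
`∫₀¹ Δ(t)/t dt = ∫₀¹ h(s) ∫ₛ¹ dt/t ds = ∫₀¹ h(s) log(1/s) ds`, and the limit is the absolute
continuity of the integral of the integrable function `Δ(t)/t`.
-/

open MeasureTheory Set Filter Real
open scoped Topology ENNReal

theorem mul_log_le_rpow_add_mul_log {x u : ℝ} (hx : 0 ≤ x) (hu : 0 ≤ u) :
    x * log u ≤ 4 * u ^ (3 / 4 : ℝ) + 2 * (x * max (log x) 0) := by
  have hxlog : 0 ≤ x * max (log x) 0 := mul_nonneg hx (le_max_right _ _)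
  have hpow : 0 ≤ u ^ (3 / 4 : ℝ) := rpow_nonneg hu _
  rcases le_or_gt (log u) 0 with hlogu | hlogu
  · nlinarith [mul_nonpos_of_nonneg_of_nonpos hx hlogu]
  have hu0 : 0 < u := by
    by_contra! h
    simp [le_antisymm h hu] at hlogu
  by_cases hlarge : log u ≤ 2 * log x
  · have : log u ≤ 2 * max (log x) 0 := hlarge.trans (by gcongr; exact le_max_left _ _)
    nlinarith [mul_le_mul_of_nonneg_left this hx]
  · have hx_le : x ≤ u ^ (1 / 2 : ℝ) := by
      rcases hx.eq_or_lt with rfl | hx0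
      · exact rpow_nonneg hu _
      rw [← exp_log hx0, rpow_def_of_pos hu0]
      exact exp_le_exp.mpr (by linarith)
    have hlog_le : log u ≤ 4 * u ^ (1 / 4 : ℝ) := by
      have := log_le_rpow_div hu (ε := 1 / 4) (by norm_num)
      linarith
    calc x * log u ≤ u ^ (1 / 2 : ℝ) * (4 * u ^ (1 / 4 : ℝ)) :=
          mul_le_mul hx_le hlog_le hlogu.le (rpow_nonneg hu _)
      _ = 4 * u ^ (3 / 4 : ℝ) := by
          rw [mul_left_comm, ← rpow_add hu0]; norm_num
      _ ≤ _ := by linarith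

theorem integrableOn_mul_log_one_div {f : ℝ → ℝ}
    (hf : AEStronglyMeasurable f (volume.restrict (Ioc 0 1)))
    (hf0 : ∀ s ∈ Ioc (0 : ℝ) 1, 0 ≤ f s)
    (hLlogL : IntegrableOn (fun s => f s * max (log (f s)) 0) (Ioc 0 1)) :
    IntegrableOn (fun s => f s * log (1 / s)) (Ioc 0 1) := by
  have hrpow : IntegrableOn (fun s : ℝ => s ^ (-(3 / 4) : ℝ)) (Ioc 0 1) :=
    (intervalIntegral.intervalIntegrable_rpow' (by norm_num)).1
  refine Integrable.mono' ((hrpow.const_mul 4).add (hLlogL.const_mul 2))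
    (hf.mul (measurable_log.comp (measurable_const.div measurable_id)).aestronglyMeasurable) ?_
  filter_upwards [ae_restrict_mem measurableSet_Ioc] with s ⟨hs0, hs1⟩
  have hlog : 0 ≤ log (1 / s) := log_nonneg (one_le_one_div hs0 hs1)
  rw [norm_of_nonneg (mul_nonneg (hf0 s ⟨hs0, hs1⟩) hlog), Pi.add_apply, rpow_neg hs0.le,
    ← inv_rpow hs0.le]
  simpa [one_div] using mul_log_le_rpow_add_mul_log (hf0 s ⟨hs0, hs1⟩) (one_div_nonneg.2 hs0.le)

theorem setLIntegral_Icc_inv {a b : ℝ} (ha : 0 < a) (hab : a ≤ b) :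
    ∫⁻ t in Icc a b, (ENNReal.ofReal t)⁻¹ = ENNReal.ofReal (log (b / a)) := by
  have hpos : ∀ t ∈ Icc a b, 0 < t := fun t ht => ha.trans_le ht.1
  have hint : IntegrableOn (fun t : ℝ => t⁻¹) (Icc a b) :=
    (continuousOn_inv₀.mono fun t ht => (hpos t ht).ne').integrableOn_compact isCompact_Icc
  rw [setLIntegral_congr_fun measurableSet_Icc fun t ht =>
      (ENNReal.ofReal_inv_of_pos (hpos t ht)).symm,
    ← ofReal_integral_eq_lintegral_ofReal hint
      ((ae_restrict_mem measurableSet_Icc).mono fun t ht => (inv_pos.2 (hpos t ht)).le),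
    integral_Icc_eq_integral_Ioc, ← intervalIntegral.integral_of_le hab,
    integral_inv_of_pos ha (ha.trans_le hab)]

theorem lintegral_setLIntegral_Ioc_div {φ : ℝ → ℝ≥0∞} {b : ℝ}
    (hφ : AEMeasurable φ (volume.restrict (Ioc 0 b))) :
    ∫⁻ t in Ioc 0 b, (∫⁻ s in Ioc 0 t, φ s) / ENNReal.ofReal t =
      ∫⁻ s in Ioc 0 b, φ s * ENNReal.ofReal (log (b / s)) := by
  let F : ℝ → ℝ → ℝ≥0∞ := fun t s => (Iic t).indicator (fun s => φ s * (ENNReal.ofReal t)⁻¹) s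
  have hF : Function.uncurry F =
      {p : ℝ × ℝ | p.2 ≤ p.1}.indicator fun p => φ p.2 * (ENNReal.ofReal p.1)⁻¹ :=
    rfl
  calc ∫⁻ t in Ioc 0 b, (∫⁻ s in Ioc 0 t, φ s) / ENNReal.ofReal t
      = ∫⁻ t in Ioc 0 b, ∫⁻ s in Ioc 0 b, F t s := by
        refine setLIntegral_congr_fun measurableSet_Ioc fun t ⟨ht0, htb⟩ => ?_
        rw [lintegral_indicator measurableSet_Iic, Measure.restrict_restrict measurableSet_Iic,
          Iic_inter_Ioc_of_le htb,
          lintegral_mul_const' _ _ (ENNReal.inv_ne_top.2 (ENNReal.ofReal_pos.2 ht0).ne'),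
          div_eq_mul_inv]
    _ = ∫⁻ s in Ioc 0 b, ∫⁻ t in Ioc 0 b, F t s := by
        refine lintegral_lintegral_swap ?_
        rw [hF]
        exact ((hφ.comp_snd).mul measurable_fst.ennreal_ofReal.inv.aemeasurable).indicator
          (measurableSet_le measurable_snd measurable_fst)
    _ = ∫⁻ s in Ioc 0 b, φ s * ENNReal.ofReal (log (b / s)) := by
        refine setLIntegral_congr_fun measurableSet_Ioc fun s ⟨hs0, hsb⟩ => ?_
        have hFs : (fun t => F t s) = (Ici s).indicator fun t => φ s * (ENNReal.ofReal t)⁻¹ := by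
          ext t; simp [F, indicator_apply]
        have hset : Ici s ∩ Ioc 0 b = Icc s b := by
          ext t
          exact ⟨fun ⟨hst, _, htb⟩ => ⟨hst, htb⟩, fun ⟨hst, htb⟩ => ⟨hst, hs0.trans_le hst, htb⟩⟩
        rw [hFs, lintegral_indicator measurableSet_Ici, Measure.restrict_restrict measurableSet_Ici,
          hset, lintegral_const_mul _ (by fun_prop), setLIntegral_Icc_inv hs0 hsb]

theorem integrableOn_setIntegral_Ioc_div {f : ℝ → ℝ} {b : ℝ} (hb : 0 ≤ b)
    (hf : IntegrableOn f (Ioc 0 b)) (hf0 : ∀ s ∈ Ioc 0 b, 0 ≤ f s)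
    (hlog : IntegrableOn (fun s => f s * log (b / s)) (Ioc 0 b)) :
    IntegrableOn (fun t => (∫ s in Ioc 0 t, f s) / t) (Ioc 0 b) := by
  have hprim : ContinuousOn (fun t => ∫ s in 0..t, f s) (uIcc 0 b) :=
    intervalIntegral.continuousOn_primitive_interval'
      ((intervalIntegrable_iff_integrableOn_Ioc_of_le hb).2 hf) left_mem_uIcc
  have hmeas :
      AEStronglyMeasurable (fun t => (∫ s in Ioc 0 t, f s) / t) (volume.restrict (Ioc 0 b)) := by
    refine ((hprim.mono ?_).div continuousOn_id fun t ht => ht.1.ne').aestronglyMeasurable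
      measurableSet_Ioc |>.congr ?_
    · exact Ioc_subset_Icc_self.trans (uIcc_of_le hb).symm.subset
    · filter_upwards [ae_restrict_mem measurableSet_Ioc] with t ht
      rw [Pi.div_apply, id_eq, intervalIntegral.integral_of_le ht.1.le]
  have hΔ0 : ∀ t ∈ Ioc 0 b, 0 ≤ ∫ s in Ioc 0 t, f s := fun t ht =>
    setIntegral_nonneg measurableSet_Ioc fun s hs => hf0 s ⟨hs.1, hs.2.trans ht.2⟩
  refine ⟨hmeas, ?_⟩
  rw [hasFiniteIntegral_iff_ofReal ((ae_restrict_mem measurableSet_Ioc).mono fun t ht =>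
    div_nonneg (hΔ0 t ht) ht.1.le)]
  calc ∫⁻ t in Ioc 0 b, ENNReal.ofReal ((∫ s in Ioc 0 t, f s) / t)
      = ∫⁻ t in Ioc 0 b, (∫⁻ s in Ioc 0 t, ENNReal.ofReal (f s)) / ENNReal.ofReal t := by
        refine setLIntegral_congr_fun measurableSet_Ioc fun t ht => ?_
        rw [ENNReal.ofReal_div_of_pos ht.1, ofReal_integral_eq_lintegral_ofReal
          (hf.mono_set (Ioc_subset_Ioc_right ht.2)) ((ae_restrict_mem measurableSet_Ioc).mono
            fun s hs => hf0 s ⟨hs.1, hs.2.trans ht.2⟩)]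
    _ = ∫⁻ s in Ioc 0 b, ENNReal.ofReal (f s * log (b / s)) := by
        rw [lintegral_setLIntegral_Ioc_div hf.aemeasurable.ennreal_ofReal]
        exact setLIntegral_congr_fun measurableSet_Ioc fun s hs =>
          (ENNReal.ofReal_mul (hf0 s hs)).symm
    _ < ⊤ := hlog.lintegral_lt_top

theorem tendsto_setIntegral_Ioc_nhdsGT {E : Type*} [NormedAddCommGroup E] [NormedSpace ℝ E]
    {g : ℝ → E} {a b : ℝ} (hab : a < b) (hg : IntegrableOn g (Ioc a b)) :
    Tendsto (fun δ => ∫ t in Ioc a δ, g t) (𝓝[>] a) (𝓝 0) := by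
  have hmeasure : Tendsto (fun δ => volume.restrict (Ioc a b) (Ioc a δ)) (𝓝[>] a) (𝓝 0) := by
    refine tendsto_of_tendsto_of_tendsto_of_le_of_le tendsto_const_nhds ?_ (fun _ => zero_le)
      fun δ => Measure.restrict_apply_le _ _
    simp only [Real.volume_Ioc]
    rw [← ENNReal.ofReal_zero]
    exact ENNReal.tendsto_ofReal (((continuous_id.sub continuous_const).tendsto' a 0
      (sub_self a)).mono_left nhdsWithin_le_nhds)
  refine (hg.tendsto_setIntegral_nhds_zero hmeasure).congr' ?_
  filter_upwards [Ioc_mem_nhdsGT hab] with δ hδ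
  rw [Measure.restrict_restrict measurableSet_Ioc, inter_eq_left.2 (Ioc_subset_Ioc_right hδ.2)]

theorem stmt17_general (h : ℝ → ℝ)
    (h0 : ∀ s ∈ Set.Ioc (0 : ℝ) 1, 0 ≤ h s)
    (hint : IntegrableOn h (Set.Ioc 0 1))
    (hLlogL : IntegrableOn (fun s => h s * max (Real.log (h s)) 0) (Set.Ioc 0 1)) :
    IntegrableOn (fun s => h s * Real.log (1 / s)) (Set.Ioc 0 1) ∧
    IntegrableOn (fun t => (∫ s in Set.Ioc (0 : ℝ) t, h s) / t) (Set.Ioc 0 1) ∧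
    Filter.Tendsto (fun δ : ℝ => ∫ t in Set.Ioc (0 : ℝ) δ, (∫ s in Set.Ioc (0 : ℝ) t, h s) / t)
      (nhdsWithin 0 (Set.Ioi 0)) (nhds 0) := by
  have hlog := integrableOn_mul_log_one_div hint.aestronglyMeasurable h0 hLlogL
  have hΔ := integrableOn_setIntegral_Ioc_div zero_le_one hint h0 hlog
  exact ⟨hlog, hΔ, tendsto_setIntegral_Ioc_nhdsGT zero_lt_one hΔ⟩

/-- The key estimate in the proof of Proposition 1 of the paper: a nonincreasing
nonnegative function `h` of the Zygmund class `L log L` on `(0,1]` satisfies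
`∫₀¹ h(s) log(1/s) ds < ∞`; consequently, for `Δ(t) = ∫₀^t h(s) ds` one has
`∫₀¹ Δ(t)/t dt < ∞` and `∫₀^δ Δ(t)/t dt → 0` as `δ → 0⁺`. -/
theorem stmt17 (h : ℝ → ℝ) (hmono : AntitoneOn h (Set.Ioc 0 1))
    (h0 : ∀ s ∈ Set.Ioc (0 : ℝ) 1, 0 ≤ h s)
    (hint : IntegrableOn h (Set.Ioc 0 1))
    (hLlogL : IntegrableOn (fun s => h s * max (Real.log (h s)) 0) (Set.Ioc 0 1)) :
    IntegrableOn (fun s => h s * Real.log (1 / s)) (Set.Ioc 0 1) ∧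
    IntegrableOn (fun t => (∫ s in Set.Ioc (0 : ℝ) t, h s) / t) (Set.Ioc 0 1) ∧
    Filter.Tendsto (fun δ : ℝ => ∫ t in Set.Ioc (0 : ℝ) δ, (∫ s in Set.Ioc (0 : ℝ) t, h s) / t)
      (nhdsWithin 0 (Set.Ioi 0)) (nhds 0) :=
  stmt17_general h h0 hint hLlogL
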